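/- Let 𝔠 ⊆ ℝ^k be a cone (closed under multiplication by positive scalars) with nonempty interior. Then the set of integer lattice points ℤ^k ∩ 𝔠 is Zariski dense in ℝ^k; that is, every polynomial P ∈ ℝ[x₁,…,x_k] vanishing on all points of ℤ^k ∩ 𝔠 is identically zero. -/
import Mathlib


open MvPolynomial

/-- A multivariate polynomial vanishing on a grid `S 0 × ⋯ × S (k-1)` with
`degreeOf i P < (S i).card` is zero. -/
lemma mv_grid_zero : ∀ (k : ℕ) (P : MvPolynomial (Fin k) ℝ) (S : Fin k → Finset ℝ),
    (∀ i, P.degreeOf i < (S i).card) →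
    (∀ x : Fin k → ℝ, (∀ i, x i ∈ S i) → MvPolynomial.eval x P = 0) → P = 0 := by
  intro k
  induction k with
  | zero =>
    intro P S hdeg hval
    have h := hval (fun i => i.elim0) (fun i => i.elim0)
    rw [P.eq_C_of_isEmpty] at h ⊢
    simpa using h
  | succ n IH =>
    intro P S hdeg hval
    set Q := finSuccEquiv ℝ n P with hQ
    have hcoeff : ∀ j : ℕ, Q.coeff j = 0 := by
      intro j
      apply IH (Q.coeff j) (fun i => S i.succ)
      · intro i
        exact lt_of_le_of_lt (degreeOf_coeff_finSuccEquiv P i j) (hdeg i.succ)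
      · intro s hs
        -- the one-variable polynomial vanishes on S 0
        have hpoly : Polynomial.map (eval s) Q = 0 := by
          apply Polynomial.eq_zero_of_natDegree_lt_card_of_eval_eq_zero' _ (S 0)
          · intro y hy
            rw [← eval_eq_eval_mv_eval']
            apply hval
            intro i
            refine Fin.cases ?_ ?_ i
            · simpa using hy
            · intro i; simpa using hs i
          · calc (Polynomial.map (eval s) Q).natDegree ≤ Q.natDegree :=
                  Polynomial.natDegree_map_le
              _ = P.degreeOf 0 := natDegree_finSuccEquiv P
              _ < (S 0).card := hdeg 0
        have := congrArg (fun p => Polynomial.coeff p j) hpoly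
        simpa using this
    have hQ0 : Q = 0 := Polynomial.ext fun j => by simp [hcoeff j]
    exact (finSuccEquiv ℝ n).injective (by rw [← hQ, hQ0, map_zero])

/-- A cone `c ⊆ ℝ^k` (closed under multiplication by positive scalars)
with nonempty interior has Zariski-dense integer points: every real polynomial in `k`
variables vanishing on all integer lattice points of `c` is identically zero. -/

theorem zariski_dense_lattice_points_of_cone {k : ℕ}
    (c : Set (Fin k → ℝ))
    (hcone : ∀ v ∈ c, ∀ t : ℝ, 0 < t → t • v ∈ c)
    (hint : (interior c).Nonempty)
    (P : MvPolynomial (Fin k) ℝ)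
    (hvanish : ∀ m : Fin k → ℤ, (fun i => (m i : ℝ)) ∈ c →
      MvPolynomial.eval (fun i => (m i : ℝ)) P = 0) :
    P = 0 := by
  obtain ⟨x0, hx0⟩ := hint
  obtain ⟨ε, hε, hball⟩ := Metric.isOpen_iff.mp isOpen_interior x0 hx0
  have hball' : Metric.ball x0 ε ⊆ c := hball.trans interior_subset
  set D := P.totalDegree with hD
  obtain ⟨n, hn⟩ := exists_nat_gt ((D + 2) / ε)
  have hnpos : 0 < (n : ℝ) := lt_of_le_of_lt (div_nonneg (by positivity) hε.le) hn
  have hnε : (D : ℝ) + 2 < n * ε := by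
    rw [div_lt_iff₀ hε] at hn; linarith
  set b : Fin k → ℤ := fun i => round ((n : ℝ) * x0 i) with hb
  apply mv_grid_zero k P
    (fun i => (Finset.range (D + 1)).image (fun j : ℕ => ((b i + (j : ℤ) : ℤ) : ℝ)))
  · intro i
    have hinj : Function.Injective (fun j : ℕ => ((b i + (j : ℤ) : ℤ) : ℝ)) := by
      intro a b h
      simp only at h
      exact_mod_cast (by push_cast at h; linarith : (a : ℝ) = b)
    rw [Finset.card_image_of_injective _ hinj, Finset.card_range]
    exact Nat.lt_succ_of_le (P.degreeOf_le_totalDegree i)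
  · intro x hx
    have hj : ∀ i, ∃ j ∈ Finset.range (D + 1), ((b i + (j : ℤ) : ℤ) : ℝ) = x i := by
      intro i; simpa using hx i
    choose j hjmem hjx using hj
    set m : Fin k → ℤ := fun i => b i + (j i : ℤ) with hm
    have hxm : x = fun i => ((m i : ℤ) : ℝ) := by
      funext i; rw [← hjx i]
    have hmem : (fun i => ((m i : ℤ) : ℝ)) ∈ c := by
      have hy : (n : ℝ)⁻¹ • (fun i => ((m i : ℤ) : ℝ)) ∈ Metric.ball x0 ε := by
        rw [Metric.mem_ball, dist_pi_lt_iff hε]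
        intro i
        have hji : (j i : ℝ) ≤ D := by
          have := Finset.mem_range.mp (hjmem i)
          exact_mod_cast Nat.lt_succ_iff.mp this
        have hround : |((b i : ℝ)) - (n : ℝ) * x0 i| ≤ 1 / 2 := by
          rw [hb, abs_sub_comm]; simpa using abs_sub_round ((n : ℝ) * x0 i)
        have hnum : |((m i : ℝ)) - (n : ℝ) * x0 i| < n * ε := by
          have h1 : ((m i : ℝ)) = (b i : ℝ) + (j i : ℝ) := by push_cast [hm]; ring
          rw [h1]
          have := abs_add_le ((b i : ℝ) - (n : ℝ) * x0 i) (j i : ℝ)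
          have h2 : |(j i : ℝ)| = (j i : ℝ) := abs_of_nonneg (by positivity)
          calc |(b i : ℝ) + (j i : ℝ) - (n : ℝ) * x0 i|
              = |((b i : ℝ) - (n : ℝ) * x0 i) + (j i : ℝ)| := by ring_nf
            _ ≤ |(b i : ℝ) - (n : ℝ) * x0 i| + |(j i : ℝ)| := abs_add_le _ _
            _ < n * ε := by rw [h2]; linarith
        simp only [Pi.smul_apply, smul_eq_mul, Real.dist_eq]
        have heq : (n : ℝ)⁻¹ * (m i : ℝ) - x0 i = ((m i : ℝ) - n * x0 i) / n := by
          field_simp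
        rw [heq, abs_div, abs_of_pos hnpos]
        exact (div_lt_iff₀ hnpos).mpr (by linarith)
      have := hcone _ (hball' hy) (n : ℝ) hnpos
      rwa [smul_inv_smul₀ (ne_of_gt hnpos)] at this
    rw [hxm]
    exact hvanish m hmem
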